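/- A bivariate function f : T_Φ → ℝ is M♮-concave if and only if for every p ∈ ℝ² the maximizer set D_f(p) = { x ∈ T_Φ : f(x) − ⟨p,x⟩ ≥ f(y) − ⟨p,y⟩ for every y ∈ T_Φ } is an M♮-convex subset of ℤ². -/

import Mathlib

open Finset

/-- Embedding of `ℤ²` into `ℝ²`. -/
def toR (x : Fin 2 → ℤ) : Fin 2 → ℝ := fun j => (x j : ℝ)

/-- `chi none = χ₀` is the zero vector, `chi (some i) = χ_i` is the `i`-th unit vector. -/
def chi : Option (Fin 2) → (Fin 2 → ℤ)
  | none => 0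
  | some i => Pi.single i 1

/-- A set `S ⊆ ℤ²` is M♮-convex if for all `x, y ∈ S` and every index `i` with `x^i > y^i`
there exists `j` with `x^j < y^j` or `j = 0` such that `x − χ_i + χ_j ∈ S` and
`y + χ_i − χ_j ∈ S`. -/
def MnConvexSet (S : Set (Fin 2 → ℤ)) : Prop :=
  ∀ x ∈ S, ∀ y ∈ S, ∀ i : Fin 2, y i < x i →
    ∃ j : Option (Fin 2), (∀ j', j = some j' → x j' < y j') ∧
      x - Pi.single i 1 + chi j ∈ S ∧ y + Pi.single i 1 - chi j ∈ S

/-- `T_Φ = { x ∈ ℤ²_{≥0} : x¹ + x² ≤ Φ }`. -/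
def TPhi (Φ : ℤ) : Set (Fin 2 → ℤ) := {x | 0 ≤ x 0 ∧ 0 ≤ x 1 ∧ x 0 + x 1 ≤ Φ}

/-- M♮-concavity of a function on `T_Φ` (exchange property of its extension by `−∞`). -/
def MnConcaveOn (Φ : ℤ) (f : (Fin 2 → ℤ) → ℝ) : Prop :=
  ∀ x ∈ TPhi Φ, ∀ y ∈ TPhi Φ, ∀ i : Fin 2, y i < x i →
    ∃ j : Option (Fin 2), (∀ j', j = some j' → x j' < y j') ∧
      x - Pi.single i 1 + chi j ∈ TPhi Φ ∧ y + Pi.single i 1 - chi j ∈ TPhi Φ ∧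
      f x + f y ≤ f (x - Pi.single i 1 + chi j) + f (y + Pi.single i 1 - chi j)

noncomputable def lam1 (S : Set (Fin 2 → ℤ)) : ℤ := sInf ((fun x => x 0) '' S)
noncomputable def mu1 (S : Set (Fin 2 → ℤ)) : ℤ := sSup ((fun x => x 0) '' S)
noncomputable def lam2 (S : Set (Fin 2 → ℤ)) : ℤ := sInf ((fun x => x 1) '' S)
noncomputable def mu2 (S : Set (Fin 2 → ℤ)) : ℤ := sSup ((fun x => x 1) '' S)
noncomputable def lam0 (S : Set (Fin 2 → ℤ)) : ℤ := sInf ((fun x => x 0 + x 1) '' S)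
noncomputable def mu0 (S : Set (Fin 2 → ℤ)) : ℤ := sSup ((fun x => x 0 + x 1) '' S)

/-- Boundedness of a subset of `ℤ²`. -/
def BoundedSet (S : Set (Fin 2 → ℤ)) : Prop := ∃ M : ℤ, ∀ x ∈ S, |x 0| ≤ M ∧ |x 1| ≤ M

/-- The quantity `ℓ_LH(S) − ℓ_UH(S) = (μ₁ − (λ₀ − λ₂)) − ((μ₀ − μ₂) − λ₁)`;
`S` is of positive-type if it is `> 0`, of zero-type if it equals `0`, and of
negative-type if it is `< 0`. -/
noncomputable def typeQ (S : Set (Fin 2 → ℤ)) : ℤ :=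
  (mu1 S - (lam0 S - lam2 S)) - ((mu0 S - mu2 S) - lam1 S)

/-- `⟨p,x⟩ = p¹x¹ + p²x²`. -/
def inner2 (p : Fin 2 → ℝ) (x : Fin 2 → ℤ) : ℝ := p 0 * x 0 + p 1 * x 1

/-- The maximizer set `D_f(p)`. -/
def maximizerSet (Φ : ℤ) (f : (Fin 2 → ℤ) → ℝ) (p : Fin 2 → ℝ) : Set (Fin 2 → ℤ) :=
  {x | x ∈ TPhi Φ ∧ ∀ y ∈ TPhi Φ, f y - inner2 p y ≤ f x - inner2 p x}

/-- A subset of `ℤ²` is two-dimensional if it is not contained in any affine line of `ℝ²`. -/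
def TwoDimensional (S : Set (Fin 2 → ℤ)) : Prop :=
  ¬ ∃ a b c : ℝ, (a ≠ 0 ∨ b ≠ 0) ∧ ∀ x ∈ S, a * (x 0 : ℝ) + b * (x 1 : ℝ) = c

/-- Feasible assignments `y` for demand vector `x` and supplies `φ`. -/
def FeasibleAssign {V : Type} [Fintype V] (φ : V → ℤ) (x : Fin 2 → ℤ)
    (y : V → Fin 2 → ℤ) : Prop :=
  (∀ i j, 0 ≤ y i j) ∧ (∀ j, ∑ i, y i j = x j) ∧ (∀ i, y i 0 + y i 1 ≤ φ i)

/-- `f` is the assignment valuation represented by `(V, w, φ)`. -/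
def IsAssignmentValuation (Φ : ℤ) (f : (Fin 2 → ℤ) → ℝ) (V : Type) [Fintype V]
    (w : V → Fin 2 → ℝ) (φ : V → ℤ) : Prop :=
  (∀ i, 0 < φ i) ∧ (∑ i, φ i = Φ) ∧
  ∀ x ∈ TPhi Φ, IsGreatest
    {s : ℝ | ∃ y : V → Fin 2 → ℤ, FeasibleAssign φ x y ∧
       s = ∑ i, (w i 0 * (y i 0 : ℝ) + w i 1 * (y i 1 : ℝ))} (f x)

/-- A hexagonalization of `T_Φ`: nonempty M♮-convex sets covering `T_Φ` whose convex hulls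
have pairwise disjoint interiors. -/
def IsHexagonalization (Φ : ℤ) {q : ℕ} (H : Fin q → Set (Fin 2 → ℤ)) : Prop :=
  (∀ i, (H i).Nonempty) ∧ (∀ i, MnConvexSet (H i)) ∧ (⋃ i, H i) = TPhi Φ ∧
  ∀ i j : Fin q, i ≠ j →
    interior (convexHull ℝ (toR '' H i)) ∩ interior (convexHull ℝ (toR '' H j)) = ∅

/-- A feasible hexagonalization: every member is of positive- or zero-type, and at least one
member is of positive-type. -/
def IsFeasibleHex (Φ : ℤ) {q : ℕ} (H : Fin q → Set (Fin 2 → ℤ)) : Prop :=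
  IsHexagonalization Φ H ∧ (∀ i, 0 ≤ typeQ (H i)) ∧ ∃ i, 0 < typeQ (H i)


/-!
An exchange `x - χ_i + χ_j`, `y + χ_i - χ_j` preserves `⟨p, x⟩ + ⟨p, y⟩`, so M♮-concavity of `f`
passes to its maximizer sets. Conversely, let `x, y ∈ T_Φ` have midpoint `c` in the interior of
the triangle. Minimising the convex coercive function `p ↦ max_z (f z + ⟨p, c - z⟩)` gives a
`p` with `c` in the convex hull of `D_f(p)` (LP duality). A finite M♮-convex subset of `ℤ²`
contains every lattice point lying within distance `1` of a point of its hull in each of the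
directions `χ₁`, `χ₂`, `χ₁ + χ₂`; hence both halves `u, v` of a balanced splitting `u + v = x + y`
lie in `D_f(p)`, and `f x + f y ≤ f u + f v`. For pairs at distance two these are local exchange
inequalities, which propagate to the full exchange property by induction on the distance.
-/

def MnConvexSet₂ (S : Set (ℤ × ℤ)) : Prop :=
  ∀ x ∈ S, ∀ y ∈ S,
    (y.1 < x.1 →
      ((x.1 - 1, x.2) ∈ S ∧ (y.1 + 1, y.2) ∈ S) ∨
      (x.2 < y.2 ∧ (x.1 - 1, x.2 + 1) ∈ S ∧ (y.1 + 1, y.2 - 1) ∈ S)) ∧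
    (y.2 < x.2 →
      ((x.1, x.2 - 1) ∈ S ∧ (y.1, y.2 + 1) ∈ S) ∨
      (x.1 < y.1 ∧ (x.1 + 1, x.2 - 1) ∈ S ∧ (y.1 - 1, y.2 + 1) ∈ S))

namespace MnConvexSet₂

variable {S : Set (ℤ × ℤ)}

theorem preimage_swap (hS : MnConvexSet₂ S) : MnConvexSet₂ (Prod.swap ⁻¹' S) :=
  fun _ hx _ hy => ⟨(hS _ hx _ hy).2, (hS _ hx _ hy).1⟩

theorem exists_mem_add_eq (hS : MnConvexSet₂ S) {u v : ℤ × ℤ} (hu : u ∈ S) (hv : v ∈ S)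
    {s : ℤ} (hus : u.1 + u.2 ≤ s) (hsv : s ≤ v.1 + v.2) : ∃ x ∈ S, x.1 + x.2 = s := by
  rcases hus.eq_or_lt with h | hus
  · exact ⟨u, hu, h⟩
  rcases lt_or_ge u.1 v.1 with h | h
  · rcases (hS v hv u hu).1 h with ⟨-, hu'⟩ | ⟨-, hv', -⟩
    · exact exists_mem_add_eq hS hu' hv (by dsimp only; omega) hsv
    · exact exists_mem_add_eq hS hu hv' hus.le (by dsimp only; omega)
  · rcases (hS v hv u hu).2 (by omega) with ⟨-, hu'⟩ | ⟨-, hv', -⟩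
    · exact exists_mem_add_eq hS hu' hv (by dsimp only; omega) hsv
    · exact exists_mem_add_eq hS hu hv' hus.le (by dsimp only; omega)
termination_by (v.1 - u.1).natAbs + (v.2 - u.2).natAbs
decreasing_by all_goals omega

theorem add_one_sub_one_mem (hS : MnConvexSet₂ S) {x y : ℤ × ℤ} (hx : x ∈ S) (hy : y ∈ S)
    (hxy : x.1 + x.2 = y.1 + y.2) (h : x.1 + 2 ≤ y.1) : (x.1 + 1, x.2 - 1) ∈ S := by
  rcases (hS y hy x hx).1 (by omega) with ⟨hy', hx'⟩ | ⟨-, -, hx'⟩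
  · rcases (hS _ hx' _ hy').2 (by dsimp only; omega) with ⟨hx'', -⟩ | ⟨-, hz, -⟩
    · exact hx''
    · rcases (hS _ hz _ hx).1 (by dsimp only; omega) with ⟨h', -⟩ | ⟨-, -, h'⟩
      · simpa using h'
      · exact h'
  · exact hx'

theorem mem_of_add_eq (hS : MnConvexSet₂ S) {x y z : ℤ × ℤ} (hx : x ∈ S) (hy : y ∈ S)
    (hxy : x.1 + x.2 = y.1 + y.2) (hz : z.1 + z.2 = x.1 + x.2) (hxz : x.1 ≤ z.1)
    (hzy : z.1 ≤ y.1) : z ∈ S := by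
  by_cases h : z.1 = x.1
  · rwa [show z = x from Prod.ext h (by omega)]
  by_cases h' : z.1 = y.1
  · rwa [show z = y from Prod.ext h' (by omega)]
  exact mem_of_add_eq hS (hS.add_one_sub_one_mem hx hy hxy (by omega)) hy
    (by dsimp only; omega) (by dsimp only; omega) (by dsimp only; omega) hzy
termination_by (y.1 - x.1).natAbs
decreasing_by omega

theorem exists_mem_add_eq_fst_le (hS : MnConvexSet₂ S) (hfin : S.Finite) {s t : ℤ}
    (hs : ∃ x ∈ S, x.1 + x.2 = s) (ha : ∃ a ∈ S, a.1 ≤ t) (hb : ∃ b ∈ S, s - t ≤ b.2) :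
    ∃ x ∈ S, x.1 + x.2 = s ∧ x.1 ≤ t := by
  obtain ⟨x, ⟨hx, hxs⟩, hmin⟩ := Set.exists_min_image {z ∈ S | z.1 + z.2 = s} Prod.fst
    (hfin.subset fun _ hz => hz.1) (by simpa [Set.Nonempty] using hs)
  refine ⟨x, hx, hxs, not_lt.1 fun hlt => ?_⟩
  obtain ⟨a, ha, hat⟩ := ha
  obtain ⟨b, hb, hbt⟩ := hb
  have hnot : (x.1 - 1, x.2 + 1) ∉ S := fun h => by
    have := hmin _ ⟨h, by dsimp only; omega⟩
    omega
  have hdown : (x.1 - 1, x.2) ∈ S := by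
    rcases (hS x hx a ha).1 (by omega) with ⟨h, -⟩ | ⟨-, h, -⟩
    · exact h
    · exact absurd h hnot
  have hup : (x.1, x.2 + 1) ∈ S := by
    rcases (hS b hb x hx).2 (by omega) with ⟨-, h⟩ | ⟨-, -, h⟩
    · exact h
    · exact absurd h hnot
  rcases (hS _ hup _ hdown).2 (by dsimp only; omega) with ⟨-, h⟩ | ⟨h, -, -⟩
  · exact hnot h
  · dsimp only at h; omega

theorem mem_of_bounds (hS : MnConvexSet₂ S) (hfin : S.Finite) (w : ℤ × ℤ)
    (h₁ : ∃ a ∈ S, a.1 ≤ w.1) (h₁' : ∃ a ∈ S, w.1 ≤ a.1)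
    (h₂ : ∃ a ∈ S, a.2 ≤ w.2) (h₂' : ∃ a ∈ S, w.2 ≤ a.2)
    (h₀ : ∃ a ∈ S, a.1 + a.2 ≤ w.1 + w.2) (h₀' : ∃ a ∈ S, w.1 + w.2 ≤ a.1 + a.2) :
    w ∈ S := by
  obtain ⟨u, hu, hu'⟩ := h₀
  obtain ⟨v, hv, hv'⟩ := h₀'
  have hs := hS.exists_mem_add_eq hu hv hu' hv'
  obtain ⟨x, hx, hxs, hxw⟩ := hS.exists_mem_add_eq_fst_le hfin hs h₁
    (by obtain ⟨b, hb, hbw⟩ := h₂'; exact ⟨b, hb, by omega⟩)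
  obtain ⟨⟨y₂, y₁⟩, hy, hys, hyw⟩ :=
    hS.preimage_swap.exists_mem_add_eq_fst_le (s := w.1 + w.2) (t := w.2)
    (hfin.preimage Prod.swap_injective.injOn)
    (by obtain ⟨⟨z₁, z₂⟩, hz, hzs⟩ := hs; exact ⟨(z₂, z₁), hz, by dsimp only at hzs ⊢; omega⟩)
    (by obtain ⟨⟨a₁, a₂⟩, ha, haw⟩ := h₂; exact ⟨(a₂, a₁), ha, haw⟩)
    (by obtain ⟨⟨a₁, a₂⟩, ha, haw⟩ := h₁'; exact ⟨(a₂, a₁), ha, by dsimp only at haw ⊢; omega⟩)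
  dsimp only at hys hyw
  exact hS.mem_of_add_eq (y := (y₁, y₂)) hx hy (by omega) (by omega) hxw (by omega)

end MnConvexSet₂

section Duality

open Filter Topology

variable {ι E : Type*} [NormedAddCommGroup E] [NormedSpace ℝ E]

theorem exists_mul_norm_le_apply_sub_of_mem_interior_convexHull {s : Set E} {c : E}
    (hc : c ∈ interior (convexHull ℝ s)) :
    ∃ δ > 0, ∀ ℓ : StrongDual ℝ E, ∃ w ∈ s, δ * ‖ℓ‖ ≤ ℓ (c - w) := by
  obtain ⟨ε, hε, hball⟩ := Metric.mem_nhds_iff.1 (mem_interior_iff_mem_nhds.1 hc)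
  have hmove : ∀ (ℓ : StrongDual ℝ E) (x : E), ‖x‖ < 1 → ∃ w ∈ s, ε * ℓ x ≤ ℓ (c - w) := by
    intro ℓ x hx
    have hmem : c - ε • x ∈ convexHull ℝ s := hball <| by
      rw [Metric.mem_ball, dist_eq_norm, sub_sub_cancel_left, norm_neg, norm_smul,
        Real.norm_of_nonneg hε.le]
      nlinarith [norm_nonneg x]
    obtain ⟨w, hw, hle⟩ := (ℓ.toLinearMap.concaveOn convex_univ).exists_le_of_mem_convexHull
      (Set.subset_univ s) hmem
    refine ⟨w, hw, ?_⟩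
    simp only [ContinuousLinearMap.coe_coe, map_sub, map_smul, smul_eq_mul] at hle ⊢
    linarith
  refine ⟨ε / 2, by positivity, fun ℓ => ?_⟩
  rcases (norm_nonneg ℓ).eq_or_lt with h | h
  · obtain ⟨w, hw⟩ : s.Nonempty := convexHull_nonempty_iff.1 ⟨c, interior_subset hc⟩
    exact ⟨w, hw, by simp [norm_eq_zero.1 h.symm]⟩
  obtain ⟨x, hx, hlt⟩ := ℓ.exists_lt_apply_of_lt_opNorm (half_lt_self h)
  rw [Real.norm_eq_abs] at hlt
  rcases le_total 0 (ℓ x) with hpos | hneg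
  · obtain ⟨w, hw, hle⟩ := hmove ℓ x hx
    rw [abs_of_nonneg hpos] at hlt
    exact ⟨w, hw, by nlinarith⟩
  · obtain ⟨w, hw, hle⟩ := hmove ℓ (-x) (by rwa [norm_neg])
    rw [abs_of_nonpos hneg] at hlt
    rw [map_neg] at hle
    exact ⟨w, hw, by nlinarith⟩

theorem mem_convexHull_argmax_of_forall_sup'_le {T : Finset ι} (hT : T.Nonempty) (e : ι → E)
    (F : ι → ℝ) (c : E) (p : StrongDual ℝ E)
    (hp : ∀ q : StrongDual ℝ E, T.sup' hT (fun i => F i + p (c - e i)) ≤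
      T.sup' hT (fun i => F i + q (c - e i))) :
    c ∈ convexHull ℝ (e '' {i | i ∈ T ∧ ∀ j ∈ T, F j - p (e j) ≤ F i - p (e i)}) := by
  set A := {i | i ∈ T ∧ ∀ j ∈ T, F j - p (e j) ≤ F i - p (e i)}
  by_contra hc
  have hAfin : (e '' A).Finite := (T.finite_toSet.subset fun _ hi => hi.1).image e
  obtain ⟨q, u, hqc, hqA⟩ := geometric_hahn_banach_point_closed (convex_convexHull ℝ _)
    (hAfin.isCompact_convexHull (𝕜 := ℝ)).isClosed hc
  set m := T.sup' hT fun i => F i + p (c - e i)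
  -- `q` separates `c` from the hull of the argmax, so moving `p` along `q` lowers the maximum
  have hdecr : ∀ᶠ t in 𝓝[>] (0 : ℝ), ∀ i ∈ T, F i + (p + t • q) (c - e i) < m := by
    rw [eventually_all_finset]
    intro i hi
    have hle : F i + p (c - e i) ≤ m := Finset.le_sup' (fun i => F i + p (c - e i)) hi
    by_cases hiA : i ∈ A
    · have hneg : q (c - e i) < 0 := by
        have := hqA (e i) (subset_convexHull ℝ _ (Set.mem_image_of_mem e hiA))
        rw [map_sub]
        linarith
      filter_upwards [self_mem_nhdsWithin] with t (ht : 0 < t)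
      have : (p + t • q) (c - e i) = p (c - e i) + t * q (c - e i) := by simp
      nlinarith
    · obtain ⟨j, hj, hij⟩ : ∃ j ∈ T, F i - p (e i) < F j - p (e j) := by
        simpa only [A, Set.mem_ofPred_eq, hi, true_and, not_forall, not_le, exists_prop] using hiA
      have hlt : F i + p (c - e i) < m := by
        have hj' : F j + p (c - e j) ≤ m := Finset.le_sup' (fun i => F i + p (c - e i)) hj
        linarith [map_sub p c (e i), map_sub p c (e j)]
      have hcont : Continuous fun t : ℝ => F i + (p + t • q) (c - e i) := by fun_prop
      exact nhdsWithin_le_nhds ((hcont.tendsto 0).eventually (gt_mem_nhds (by simpa using hlt)))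
  obtain ⟨t, ht⟩ := hdecr.exists
  exact (hp (p + t • q)).not_gt ((Finset.sup'_lt_iff hT).2 ht)

theorem exists_mem_convexHull_argmax [FiniteDimensional ℝ E] {T : Set ι} (hT : T.Finite)
    (e : ι → E) (F : ι → ℝ) {c : E} (hc : c ∈ interior (convexHull ℝ (e '' T))) :
    ∃ p : StrongDual ℝ E,
      c ∈ convexHull ℝ (e '' {i ∈ T | ∀ j ∈ T, F j - p (e j) ≤ F i - p (e i)}) := by
  obtain ⟨δ, hδ, hcoer⟩ := exists_mul_norm_le_apply_sub_of_mem_interior_convexHull hc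
  have hne : hT.toFinset.Nonempty := by
    obtain ⟨_, ⟨i, hi, -⟩⟩ := convexHull_nonempty_iff.1 ⟨c, interior_subset hc⟩
    exact ⟨i, hT.mem_toFinset.2 hi⟩
  set Ψ : (StrongDual ℝ E) → ℝ := fun q => hT.toFinset.sup' hne fun i => F i + q (c - e i)
  have hcont : Continuous Ψ := Continuous.finset_sup'_apply hne fun i _ => by fun_prop
  have hlim : Tendsto Ψ (cocompact _) atTop := by
    refine tendsto_atTop_mono (fun q => ?_) (tendsto_atTop_add_const_left _
      (hT.toFinset.inf' hne F) ((tendsto_norm_cocompact_atTop).const_mul_atTop hδ))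
    obtain ⟨_, ⟨i, hi, rfl⟩, hi'⟩ := hcoer q
    have hiT := hT.mem_toFinset.2 hi
    linarith [Finset.inf'_le F hiT, Finset.le_sup' (fun i => F i + q (c - e i)) hiT]
  obtain ⟨p, hp⟩ := hcont.exists_forall_le hlim
  refine ⟨p, ?_⟩
  simpa using mem_convexHull_argmax_of_forall_sup'_le hne e F c p hp

end Duality

theorem MnConvexSet.mnConvexSet₂_image {S : Set (Fin 2 → ℤ)} (hS : MnConvexSet S) :
    MnConvexSet₂ ((fun x => (x 0, x 1)) '' S) := by
  rintro _ ⟨x, hx, rfl⟩ _ ⟨y, hy, rfl⟩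
  refine ⟨fun h => ?_, fun h => ?_⟩
  · obtain ⟨j, hj, hx', hy'⟩ := hS x hx y hy 0 h
    rcases j with _ | j
    · exact .inl ⟨⟨_, hx', by simp [chi]⟩, ⟨_, hy', by simp [chi]⟩⟩
    fin_cases j
    · exact absurd (hj 0 rfl) (by simp only at h ⊢; omega)
    · exact .inr ⟨hj 1 rfl, ⟨_, hx', by simp [chi]⟩, ⟨_, hy', by simp [chi]⟩⟩
  · obtain ⟨j, hj, hx', hy'⟩ := hS x hx y hy 1 h
    rcases j with _ | j
    · exact .inl ⟨⟨_, hx', by simp [chi]⟩, ⟨_, hy', by simp [chi]⟩⟩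
    fin_cases j
    · exact .inr ⟨hj 0 rfl, ⟨_, hx', by simp [chi]⟩, ⟨_, hy', by simp [chi]⟩⟩
    · exact absurd (hj 1 rfl) (by simp only at h ⊢; omega)

theorem exists_mem_le_of_mem_convexHull_toR {S : Set (Fin 2 → ℤ)} {c : Fin 2 → ℝ}
    (hc : c ∈ convexHull ℝ (toR '' S)) (a b : ℤ) {w : Fin 2 → ℤ}
    (hw : a * c 0 + b * c 1 < a * w 0 + b * w 1 + 1) :
    ∃ x ∈ S, a * x 0 + b * x 1 ≤ a * w 0 + b * w 1 := by
  let ℓ : (Fin 2 → ℝ) →ₗ[ℝ] ℝ := (a : ℝ) • LinearMap.proj 0 + (b : ℝ) • LinearMap.proj 1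
  obtain ⟨_, ⟨x, hx, rfl⟩, hle⟩ :=
    (ℓ.concaveOn convex_univ).exists_le_of_mem_convexHull (Set.subset_univ _) hc
  refine ⟨x, hx, Int.lt_add_one_iff.1 ?_⟩
  have : ((a * x 0 + b * x 1 : ℤ) : ℝ) < a * w 0 + b * w 1 + 1 := by
    simp only [ℓ, toR, LinearMap.add_apply, LinearMap.smul_apply, LinearMap.coe_proj,
      Function.eval, smul_eq_mul] at hle
    push_cast
    linarith
  exact_mod_cast this

theorem MnConvexSet.mem_of_near_convexHull {S : Set (Fin 2 → ℤ)} (hS : MnConvexSet S)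
    (hfin : S.Finite) {c : Fin 2 → ℝ} (hc : c ∈ convexHull ℝ (toR '' S)) {w : Fin 2 → ℤ}
    (hw₁ : |(w 0 : ℝ) - c 0| < 1) (hw₂ : |(w 1 : ℝ) - c 1| < 1)
    (hw₀ : |(w 0 + w 1 : ℝ) - (c 0 + c 1)| < 1) : w ∈ S := by
  rw [abs_lt] at hw₁ hw₂ hw₀
  have hwit : ∀ a b : ℤ, a * c 0 + b * c 1 < a * w 0 + b * w 1 + 1 →
      ∃ z ∈ (fun x => (x 0, x 1)) '' S, a * z.1 + b * z.2 ≤ a * w 0 + b * w 1 := by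
    intro a b h
    obtain ⟨x, hx, hle⟩ := exists_mem_le_of_mem_convexHull_toR hc a b h
    exact ⟨_, ⟨x, hx, rfl⟩, hle⟩
  obtain ⟨x, hx, hxw⟩ := hS.mnConvexSet₂_image.mem_of_bounds (hfin.image _) (w 0, w 1)
    (by obtain ⟨z, hz, h⟩ := hwit 1 0 (by push_cast; linarith); exact ⟨z, hz, by linarith⟩)
    (by obtain ⟨z, hz, h⟩ := hwit (-1) 0 (by push_cast; linarith); exact ⟨z, hz, by linarith⟩)
    (by obtain ⟨z, hz, h⟩ := hwit 0 1 (by push_cast; linarith); exact ⟨z, hz, by linarith⟩)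
    (by obtain ⟨z, hz, h⟩ := hwit 0 (-1) (by push_cast; linarith); exact ⟨z, hz, by linarith⟩)
    (by obtain ⟨z, hz, h⟩ := hwit 1 1 (by push_cast; linarith); exact ⟨z, hz, by linarith⟩)
    (by obtain ⟨z, hz, h⟩ := hwit (-1) (-1) (by push_cast; linarith); exact ⟨z, hz, by linarith⟩)
  rwa [show w = x by ext k; fin_cases k <;> simp_all]

theorem TPhi_finite (Φ : ℤ) : (TPhi Φ).Finite :=
  (Set.Finite.pi fun _ : Fin 2 => Set.finite_Icc 0 Φ).subset fun x ⟨h₀, h₁, h⟩ => by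
    simp only [Set.mem_pi, Set.mem_univ, Set.mem_Icc, forall_const, Fin.forall_fin_two]
    omega

theorem setOf_subset_interior_convexHull_TPhi (Φ : ℤ) :
    {c : Fin 2 → ℝ | 0 < c 0 ∧ 0 < c 1 ∧ c 0 + c 1 < Φ} ⊆
      interior (convexHull ℝ (toR '' TPhi Φ)) := by
  refine interior_maximal (fun c ⟨h₁, h₂, h₀⟩ => ?_) <|
    (isOpen_lt continuous_const (continuous_apply 0)).inter
      ((isOpen_lt continuous_const (continuous_apply 1)).inter
        (isOpen_lt ((continuous_apply 0).add (continuous_apply 1)) continuous_const))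
  have hΦ : (0 : ℝ) < Φ := by linarith
  -- `c` is a convex combination of the corners `0`, `Φ χ₁`, `Φ χ₂` of `T_Φ`
  have hcorner : ∀ k, ![0, ![Φ, 0], ![0, Φ]] k ∈ TPhi Φ := by
    have : (0 : ℤ) < Φ := by exact_mod_cast hΦ
    intro k; fin_cases k <;> simp [TPhi] <;> omega
  convert (convex_convexHull ℝ (toR '' TPhi Φ)).sum_mem (t := Finset.univ)
    (w := ![1 - (c 0 + c 1) / Φ, c 0 / Φ, c 1 / Φ])
    (z := fun k => toR (![0, ![Φ, 0], ![0, Φ]] k)) ?_ ?_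
    (fun k _ => subset_convexHull ℝ _ (Set.mem_image_of_mem toR (hcorner k)))
  · ext k
    fin_cases k <;> simp [Fin.sum_univ_three, toR] <;> field_simp
  · intro k _
    fin_cases k <;> simp <;> [skip; positivity; positivity]
    rw [div_le_one hΦ]; exact h₀.le
  · simp [Fin.sum_univ_three]; field_simp; ring

theorem inner2_eq_apply_toR (ℓ : StrongDual ℝ (Fin 2 → ℝ)) (x : Fin 2 → ℤ) :
    inner2 (fun k => ℓ (Pi.single k 1)) x = ℓ (toR x) := by
  have : toR x = (x 0 : ℝ) • Pi.single 0 1 + (x 1 : ℝ) • Pi.single 1 1 := by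
    ext k; fin_cases k <;> simp [toR]
  rw [this, map_add, map_smul, map_smul, inner2, smul_eq_mul, smul_eq_mul]
  ring

theorem exists_mem_convexHull_maximizerSet (Φ : ℤ) (f : (Fin 2 → ℤ) → ℝ) {c : Fin 2 → ℝ}
    (hc : c ∈ interior (convexHull ℝ (toR '' TPhi Φ))) :
    ∃ p, c ∈ convexHull ℝ (toR '' maximizerSet Φ f p) := by
  obtain ⟨ℓ, hℓ⟩ := exists_mem_convexHull_argmax (TPhi_finite Φ) toR f hc
  refine ⟨fun k => ℓ (Pi.single k 1), ?_⟩
  simpa only [maximizerSet, inner2_eq_apply_toR] using hℓ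

theorem add_le_add_of_forall_mnConvexSet_maximizerSet {Φ : ℤ} {f : (Fin 2 → ℤ) → ℝ}
    (H : ∀ p, MnConvexSet (maximizerSet Φ f p)) {x y u v : Fin 2 → ℤ}
    (hx : x ∈ TPhi Φ) (hy : y ∈ TPhi Φ) (huv : ∀ k, u k + v k = x k + y k)
    (hd : ∀ k, |u k - v k| ≤ 1) (hd₀ : |u 0 + u 1 - (v 0 + v 1)| ≤ 1)
    (h₁ : 0 < x 0 + y 0) (h₂ : 0 < x 1 + y 1) (h₀ : x 0 + y 0 + (x 1 + y 1) < 2 * Φ) :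
    f x + f y ≤ f u + f v := by
  set c : Fin 2 → ℝ := fun k => ((x k + y k : ℤ) : ℝ) / 2 with hc
  obtain ⟨p, hp⟩ := exists_mem_convexHull_maximizerSet Φ f
    (setOf_subset_interior_convexHull_TPhi Φ (show 0 < c 0 ∧ 0 < c 1 ∧ c 0 + c 1 < Φ by
      simp only [hc]
      refine ⟨by positivity, by positivity, ?_⟩
      have : ((x 0 + y 0 + (x 1 + y 1) : ℤ) : ℝ) < 2 * Φ := by exact_mod_cast h₀
      push_cast at this ⊢
      linarith))
  -- every balanced splitting of `x + y` lies within distance `1/2` of `c` in each direction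
  have hmem : ∀ w w' : Fin 2 → ℤ, (∀ k, w k + w' k = x k + y k) → (∀ k, |w k - w' k| ≤ 1) →
      |w 0 + w 1 - (w' 0 + w' 1)| ≤ 1 → w ∈ maximizerSet Φ f p := by
    intro w w' hs hd hd₀
    have hs' : ∀ k, (w k : ℝ) + w' k = x k + y k := fun k => by exact_mod_cast hs k
    have hd' : ∀ k, |(w k : ℝ) - w' k| ≤ 1 := fun k => by exact_mod_cast hd k
    have hd₀' : |(w 0 + w 1 : ℝ) - (w' 0 + w' 1)| ≤ 1 := by exact_mod_cast hd₀
    simp only [abs_le] at hd' hd₀'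
    refine (H p).mem_of_near_convexHull ((TPhi_finite Φ).subset fun _ h => h.1) hp ?_ ?_ ?_ <;>
      simp only [hc, abs_lt] <;> push_cast <;> constructor <;>
      linarith [hs' 0, hs' 1, (hd' 0).1, (hd' 0).2, (hd' 1).1, (hd' 1).2, hd₀'.1, hd₀'.2]
  have hu := hmem u v huv hd hd₀
  have hv := hmem v u (fun k => by rw [add_comm, huv]) (fun k => by rw [abs_sub_comm]; exact hd k)
    (by rwa [abs_sub_comm])
  have hinner : inner2 p x + inner2 p y = inner2 p u + inner2 p v := by
    have h0 : ((u 0 + v 0 : ℤ) : ℝ) = x 0 + y 0 := by exact_mod_cast huv 0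
    have h1 : ((u 1 + v 1 : ℤ) : ℝ) = x 1 + y 1 := by exact_mod_cast huv 1
    push_cast at h0 h1
    simp only [inner2]
    linear_combination -(p 0 * h0) - p 1 * h1
  linarith [hu.2 x hx, hv.2 y hy]

def LocalExchange (Φ : ℤ) (g : ℤ × ℤ → ℝ) : Prop :=
  ∀ a b : ℤ, 0 ≤ a → 0 ≤ b → a + b + 2 ≤ Φ →
    g (a, b) + g (a + 1, b + 1) ≤ g (a + 1, b) + g (a, b + 1) ∧
    g (a + 2, b) + g (a, b + 1) ≤ g (a + 1, b) + g (a + 1, b + 1) ∧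
    g (a, b + 2) + g (a + 1, b) ≤ g (a, b + 1) + g (a + 1, b + 1)

theorem localExchange_of_forall_mnConvexSet_maximizerSet {Φ : ℤ} {f : (Fin 2 → ℤ) → ℝ}
    (H : ∀ p, MnConvexSet (maximizerSet Φ f p)) :
    LocalExchange Φ (f ∘ (finTwoArrowEquiv ℤ).symm) := by
  intro a b ha hb hab
  refine ⟨?_, ?_, ?_⟩ <;> apply add_le_add_of_forall_mnConvexSet_maximizerSet H <;>
    simp [TPhi, Fin.forall_fin_two, abs_le] <;> omega

namespace LocalExchange

variable {Φ : ℤ} {g : ℤ × ℤ → ℝ}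

theorem comp_swap (hg : LocalExchange Φ g) : LocalExchange Φ (g ∘ Prod.swap) := by
  intro a b ha hb hab
  obtain ⟨h₁, h₂, h₃⟩ := hg b a hb ha (by omega)
  simp only [Function.comp_apply, Prod.swap_prod_mk]
  exact ⟨by linarith, h₃, h₂⟩

theorem add_le_two_mul_fst (hg : LocalExchange Φ g) {a b : ℤ} (ha : 1 ≤ a) (hb : 0 ≤ b)
    (hab : a + b + 1 ≤ Φ) : g (a - 1, b) + g (a + 1, b) ≤ 2 * g (a, b) := by
  obtain ⟨h₁, h₂, -⟩ := hg (a - 1) b (by omega) hb (by omega)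
  simp only [sub_add_cancel, show a - 1 + 2 = a + 1 by ring] at h₁ h₂
  linarith

theorem add_le_two_mul_diag (hg : LocalExchange Φ g) {a b : ℤ} (ha : 1 ≤ a) (hb : 1 ≤ b)
    (hab : a + b ≤ Φ) : g (a + 1, b - 1) + g (a - 1, b + 1) ≤ 2 * g (a, b) := by
  obtain ⟨-, h₂, h₃⟩ := hg (a - 1) (b - 1) (by omega) (by omega) (by omega)
  simp only [sub_add_cancel, show a - 1 + 2 = a + 1 by ring,
    show b - 1 + 2 = b + 1 by ring] at h₂ h₃
  linarith

theorem exchange_fst {x₁ x₂ y₁ y₂ : ℤ} (hg : LocalExchange Φ g) (hy₁ : 0 ≤ y₁) (hy₂ : 0 ≤ y₂)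
    (hx : x₁ + x₂ ≤ Φ) (h₁ : y₁ < x₁) (h₂ : y₂ ≤ x₂) :
    g (x₁, x₂) + g (y₁, y₂) ≤ g (x₁ - 1, x₂) + g (y₁ + 1, y₂) := by
  rcases h₂.lt_or_eq with h₂ | rfl
  · obtain ⟨h, -, -⟩ := hg y₁ y₂ hy₁ hy₂ (by omega)
    linarith [exchange_fst hg hy₁ (by omega) hx h₁ (show y₂ + 1 ≤ x₂ by omega)]
  rcases (show x₁ = y₁ + 1 ∨ y₁ + 1 < x₁ by omega) with rfl | h₁
  · rw [add_sub_cancel_right, add_comm]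
  have h := hg.add_le_two_mul_fst (a := x₁ - 1) (b := y₂) (by omega) hy₂ (by omega)
  rw [sub_add_cancel] at h
  linarith [exchange_fst hg hy₁ hy₂ (show x₁ - 1 + y₂ ≤ Φ by omega) (show y₁ < x₁ - 1 by omega)
    le_rfl]
termination_by (x₁ - y₁ + x₂ - y₂).toNat

theorem exchange_fst_snd {x₁ x₂ y₁ y₂ : ℤ} (hg : LocalExchange Φ g) (hx₂ : 0 ≤ x₂)
    (hy₁ : 0 ≤ y₁) (hx : x₁ + x₂ ≤ Φ) (hy : y₁ + y₂ ≤ Φ) (h₁ : y₁ < x₁) (h₂ : x₂ < y₂) :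
    g (x₁, x₂) + g (y₁, y₂) ≤ g (x₁ - 1, x₂ + 1) + g (y₁ + 1, y₂ - 1) := by
  rcases (show x₁ = y₁ + 1 ∨ y₁ + 2 ≤ x₁ by omega) with rfl | h₁ <;>
    rcases (show y₂ = x₂ + 1 ∨ x₂ + 2 ≤ y₂ by omega) with rfl | h₂
  · rw [add_sub_cancel_right, add_sub_cancel_right, add_comm]
  · obtain ⟨-, -, h⟩ := hg y₁ (y₂ - 2) hy₁ (by omega) (by omega)
    rw [show y₂ - 2 + 2 = y₂ by ring, show y₂ - 2 + 1 = y₂ - 1 by ring] at h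
    have ih := exchange_fst_snd hg hx₂ hy₁ hx (show y₁ + (y₂ - 1) ≤ Φ by omega)
      (lt_add_one y₁) (show x₂ < y₂ - 1 by omega)
    rw [show y₂ - 1 - 1 = y₂ - 2 by ring] at ih
    linarith
  · obtain ⟨-, h, -⟩ := hg (x₁ - 2) x₂ (by omega) hx₂ (by omega)
    rw [show x₁ - 2 + 2 = x₁ by ring, show x₁ - 2 + 1 = x₁ - 1 by ring] at h
    have ih := exchange_fst_snd hg hx₂ hy₁ (show x₁ - 1 + x₂ ≤ Φ by omega) hy
      (show y₁ < x₁ - 1 by omega) (lt_add_one x₂)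
    rw [show x₁ - 1 - 1 = x₁ - 2 by ring] at ih
    linarith
  · have h := hg.add_le_two_mul_diag (a := x₁ - 1) (b := x₂ + 1) (by omega) (by omega) (by omega)
    rw [sub_add_cancel, add_sub_cancel_right] at h
    have ih := exchange_fst_snd hg (show 0 ≤ x₂ + 1 by omega) hy₁
      (show x₁ - 1 + (x₂ + 1) ≤ Φ by omega) hy (show y₁ < x₁ - 1 by omega)
      (show x₂ + 1 < y₂ by omega)
    linarith
termination_by (x₁ - y₁ + y₂ - x₂).toNat

theorem mnConcaveOn {f : (Fin 2 → ℤ) → ℝ}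
    (hg : LocalExchange Φ (f ∘ (finTwoArrowEquiv ℤ).symm)) : MnConcaveOn Φ f := by
  set g := f ∘ (finTwoArrowEquiv ℤ).symm with hg_def
  have hf : ∀ x, f x = g (x 0, x 1) := fun x => by
    simpa [hg_def] using congrArg f ((finTwoArrowEquiv ℤ).symm_apply_apply x).symm
  clear_value g
  intro x ⟨hx₁, hx₂, hx⟩ y ⟨hy₁, hy₂, hy⟩ i hi
  fin_cases i
  · simp only [Fin.zero_eta] at hi
    rcases le_or_gt (y 1) (x 1) with h | h
    · refine ⟨none, by simp, by simp [TPhi, chi]; omega, by simp [TPhi, chi]; omega, ?_⟩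
      simpa [hf, chi] using hg.exchange_fst hy₁ hy₂ hx hi h
    · refine ⟨some 1, by simpa using h, by simp [TPhi, chi]; omega, by simp [TPhi, chi]; omega, ?_⟩
      simpa [hf, chi] using hg.exchange_fst_snd hx₂ hy₁ hx hy hi h
  · simp only [Fin.mk_one] at hi
    rcases le_or_gt (y 0) (x 0) with h | h
    · refine ⟨none, by simp, by simp [TPhi, chi]; omega, by simp [TPhi, chi]; omega, ?_⟩
      simpa [hf, chi] using hg.comp_swap.exchange_fst hy₂ hy₁ (by omega) hi h
    · refine ⟨some 0, by simpa using h, by simp [TPhi, chi]; omega, by simp [TPhi, chi]; omega, ?_⟩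
      simpa [hf, chi] using hg.comp_swap.exchange_fst_snd hx₁ hy₂ (by omega) (by omega) hi h

end LocalExchange

theorem MnConcaveOn.mnConvexSet_maximizerSet {Φ : ℤ} {f : (Fin 2 → ℤ) → ℝ}
    (hf : MnConcaveOn Φ f) (p : Fin 2 → ℝ) : MnConvexSet (maximizerSet Φ f p) := by
  intro x hx y hy i hi
  obtain ⟨j, hj, hx', hy', hle⟩ := hf x hx.1 y hy.1 i hi
  have hinner : inner2 p (x - Pi.single i 1 + chi j) + inner2 p (y + Pi.single i 1 - chi j) =
      inner2 p x + inner2 p y := by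
    simp only [inner2, Pi.sub_apply, Pi.add_apply]
    push_cast
    ring
  -- both exchanged points attain the common maximum value of `x` and `y`
  have hxy := le_antisymm (hy.2 x hx.1) (hx.2 y hy.1)
  have h₁ := hx.2 _ hx'
  have h₂ := hx.2 _ hy'
  refine ⟨j, hj, ⟨hx', fun z hz => ?_⟩, ⟨hy', fun z hz => ?_⟩⟩ <;>
    linarith [hx.2 z hz]

theorem stmt5_general (Φ : ℤ) (f : (Fin 2 → ℤ) → ℝ) :
    MnConcaveOn Φ f ↔ ∀ p : Fin 2 → ℝ, MnConvexSet (maximizerSet Φ f p) :=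
  ⟨MnConcaveOn.mnConvexSet_maximizerSet,
    fun H => (localExchange_of_forall_mnConvexSet_maximizerSet H).mnConcaveOn⟩

theorem stmt5 (Φ : ℤ) (hΦ : 0 < Φ) (f : (Fin 2 → ℤ) → ℝ) :
    MnConcaveOn Φ f ↔ ∀ p : Fin 2 → ℝ, MnConvexSet (maximizerSet Φ f p) :=
  stmt5_general Φ f
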